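/- arXiv:2305.15649 — 4 statements merged into one kernel-verified Lean document; each statement's English description precedes it below -/
import Mathlib

section
/- The temporal doubled correlation tensor T^{μ₁,…,μ_N;ν₁,…,ν_N} = Tr[σ_{μ_N} ℰ_{N-1}(⋯ℰ₁(σ_{μ₁} ρ σ_{ν₁})⋯) σ_{ν_N}], built from a density operator ρ and completely positive trace-preserving maps ℰ₁,…,ℰ_{N-1} on d×d matrices, is positive semidefinite: for every complex tensor X, ∑ conj(X_{μ⃗}) T^{μ⃗;ν⃗} X_{ν⃗} ≥ 0. -/
open Matrix BigOperators ComplexOrder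

/-- The (unnormalized) state of a multi-time process after `k+1` time steps:
`tState k = σ_{μ_{k}} ℰ_{k-1}(⋯ℰ₁(σ_{μ₀} ρ σ_{ν₀})⋯) σ_{ν_{k}}`,
with σ-insertions at every time step. -/
noncomputable def tState {d m : ℕ} (σ : Fin m → Matrix (Fin d) (Fin d) ℂ)
    (ρ : Matrix (Fin d) (Fin d) ℂ)
    (E : ℕ → Matrix (Fin d) (Fin d) ℂ → Matrix (Fin d) (Fin d) ℂ)
    (μ ν : ℕ → Fin m) : ℕ → Matrix (Fin d) (Fin d) ℂ
  | 0 => σ (μ 0) * ρ * σ (ν 0)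
  | k + 1 => σ (μ (k + 1)) * E k (tState σ ρ E μ ν k) * σ (ν (k + 1))

/-- Extension of a tuple of `n+1` indices to a function on ℕ. -/
def extF {α : Type*} (n : ℕ) (μ : Fin (n + 1) → α) (k : ℕ) : α :=
  μ ⟨min k n, Nat.lt_succ_of_le (Nat.min_le_right k n)⟩

/-- Gram factor of the multi-time process state. -/
noncomputable def Lmat {d m r : ℕ} (σ : Fin m → Matrix (Fin d) (Fin d) ℂ)
    (C : Matrix (Fin d) (Fin d) ℂ) (K : ℕ → Fin r → Matrix (Fin d) (Fin d) ℂ)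
    (μ : ℕ → Fin m) : (k : ℕ) → (Fin k → Fin r) → Matrix (Fin d) (Fin d) ℂ
  | 0, _ => σ (μ 0) * C
  | k + 1, a => σ (μ (k + 1)) * K k (a (Fin.last k)) * Lmat σ C K μ k (Fin.init a)

lemma tState_eq_gram {d m r : ℕ} (σ : Fin m → Matrix (Fin d) (Fin d) ℂ)
    (hherm : ∀ μ, (σ μ).IsHermitian)
    (C : Matrix (Fin d) (Fin d) ℂ)
    (E : ℕ → Matrix (Fin d) (Fin d) ℂ → Matrix (Fin d) (Fin d) ℂ)
    (K : ℕ → Fin r → Matrix (Fin d) (Fin d) ℂ)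
    (hKraus : ∀ k X, E k X = ∑ a, K k a * X * (K k a)ᴴ)
    (μ ν : ℕ → Fin m) :
    ∀ k : ℕ, tState σ (C * Cᴴ) E μ ν k
      = ∑ a : Fin k → Fin r, Lmat σ C K μ k a * (Lmat σ C K ν k a)ᴴ := by
  intro k
  induction k with
  | zero =>
    rw [Fintype.sum_subsingleton _ (Fin.elim0 : Fin 0 → Fin r)]
    simp only [tState, Lmat, conjTranspose_mul, (hherm (ν 0)).eq]
    noncomm_ring
  | succ k ih =>
    show σ (μ (k + 1)) * E k (tState σ (C * Cᴴ) E μ ν k) * σ (ν (k + 1)) = _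
    rw [ih, hKraus]
    rw [← Equiv.sum_comp (Fin.snocEquiv (fun _ => Fin r))
      (fun a => Lmat σ C K μ (k+1) a * (Lmat σ C K ν (k+1) a)ᴴ), Fintype.sum_prod_type]
    simp only [Lmat, Fin.snocEquiv, Equiv.coe_fn_mk, Fin.snoc_last, Fin.init_snoc,
      Finset.mul_sum, Finset.sum_mul, conjTranspose_mul, (hherm (ν (k+1))).eq]
    refine Finset.sum_congr rfl fun b _ => Finset.sum_congr rfl fun a _ => ?_
    noncomm_ring

lemma trace_mul_conjTranspose_self_nonneg {d : ℕ} (A : Matrix (Fin d) (Fin d) ℂ) :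
    0 ≤ (A * Aᴴ).trace := by
  rw [Matrix.trace]
  refine Finset.sum_nonneg fun i _ => ?_
  rw [Matrix.diag_apply, Matrix.mul_apply]
  refine Finset.sum_nonneg fun j _ => ?_
  rw [Matrix.conjTranspose_apply]
  exact mul_star_self_nonneg _

/-- The temporal doubled correlation tensor
`T^{μ⃗;ν⃗} = Tr[σ_{μ_N} ℰ_{N-1}(⋯ℰ₁(σ_{μ₁} ρ σ_{ν₁})⋯) σ_{ν_N}]`, built from a
density operator ρ and CPTP maps ℰ₁,…,ℰ_{N-1} (given via Kraus decompositions),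
is positive semidefinite: `∑ conj(X_{μ⃗}) T^{μ⃗;ν⃗} X_{ν⃗} ≥ 0`. -/
theorem temporal_DCT_posSemidef (d : ℕ) [NeZero d] (n : ℕ) (r : ℕ)
    (σ : Fin (d ^ 2) → Matrix (Fin d) (Fin d) ℂ)
    (hherm : ∀ μ, (σ μ).IsHermitian)
    (hunit : σ 0 = 1)
    (htraceless : ∀ j : Fin (d ^ 2), j ≠ 0 → (σ j).trace = 0)
    (horth : ∀ μ ν, (σ μ * σ ν).trace = if μ = ν then (d : ℂ) else 0)
    (ρ : Matrix (Fin d) (Fin d) ℂ) (hρ : ρ.PosSemidef) (hρtr : ρ.trace = 1)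
    (E : ℕ → Matrix (Fin d) (Fin d) ℂ → Matrix (Fin d) (Fin d) ℂ)
    (K : ℕ → Fin r → Matrix (Fin d) (Fin d) ℂ)
    (hKraus : ∀ k X, E k X = ∑ a, K k a * X * (K k a)ᴴ)
    (hTP : ∀ k, ∑ a, (K k a)ᴴ * K k a = 1)
    (T : (Fin (n + 1) → Fin (d ^ 2)) → (Fin (n + 1) → Fin (d ^ 2)) → ℂ)
    (hT : ∀ μ ν, T μ ν = (tState σ ρ E (extF n μ) (extF n ν) n).trace) :
    ∀ X : (Fin (n + 1) → Fin (d ^ 2)) → ℂ,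
      0 ≤ ∑ μ, ∑ ν, (starRingEnd ℂ) (X μ) * T μ ν * X ν := by
  intro X
  obtain ⟨B, hB⟩ : ∃ B : Matrix (Fin d) (Fin d) ℂ, ρ = Bᴴ * B := by
    open scoped MatrixOrder in exact CStarAlgebra.nonneg_iff_eq_star_mul_self.mp hρ.nonneg
  have hρ' : ρ = Bᴴ * (Bᴴ)ᴴ := by rw [conjTranspose_conjTranspose]; exact hB
  have key : ∀ μ ν, T μ ν
      = ∑ a : Fin n → Fin r,
        (Lmat σ Bᴴ K (extF n μ) n a * (Lmat σ Bᴴ K (extF n ν) n a)ᴴ).trace := by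
    intro μ ν
    rw [hT, hρ', tState_eq_gram σ hherm Bᴴ E K hKraus, Matrix.trace_sum]
  calc (0 : ℂ)
      ≤ ∑ a : Fin n → Fin r,
          ((∑ μ, (starRingEnd ℂ) (X μ) • Lmat σ Bᴴ K (extF n μ) n a) *
           (∑ μ, (starRingEnd ℂ) (X μ) • Lmat σ Bᴴ K (extF n μ) n a)ᴴ).trace :=
        Finset.sum_nonneg fun a _ => trace_mul_conjTranspose_self_nonneg _
    _ = ∑ a : Fin n → Fin r, ∑ μ, ∑ ν, (starRingEnd ℂ) (X μ) *
          (Lmat σ Bᴴ K (extF n μ) n a * (Lmat σ Bᴴ K (extF n ν) n a)ᴴ).trace * X ν := by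
        refine Finset.sum_congr rfl fun a _ => ?_
        simp only [conjTranspose_sum, conjTranspose_smul, Finset.sum_mul, Finset.mul_sum,
          smul_mul_assoc, mul_smul_comm, Matrix.trace_sum, Matrix.trace_smul, smul_smul,
          smul_eq_mul, starRingEnd_apply, star_star]
        conv_lhs => rw [Finset.sum_comm]
        refine Finset.sum_congr rfl fun μ _ => Finset.sum_congr rfl fun ν _ => ?_
        ring
    _ = ∑ μ, ∑ ν, (starRingEnd ℂ) (X μ) * T μ ν * X ν := by
        rw [Finset.sum_comm]
        refine Finset.sum_congr rfl fun μ _ => ?_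
        rw [Finset.sum_comm]
        refine Finset.sum_congr rfl fun ν _ => ?_
        rw [key, Finset.mul_sum, Finset.sum_mul]
end

section
/- Two-event spatial Born rule: for the two-qudit spatial doubled density operator W = (1/d⁴)∑ T^{μ₁,μ₂;ν₁,ν₂}(σ_{μ₁}⊗σ_{μ₂})⊗(σ_{ν₁}⊗σ_{ν₂}) with T^{μ₁,μ₂;ν₁,ν₂} = Tr[(σ_{μ₁}⊗σ_{μ₂})ρ(σ_{ν₁}⊗σ_{ν₂})], and local measurement operators K_a, L_b, one has Tr[(K_a ⊗ L_b ⊗ K_a† ⊗ L_b†) W] = Tr[(K_a ⊗ L_b) ρ (K_a† ⊗ L_b†)]. -/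
open Matrix BigOperators ComplexOrder Kronecker

lemma expand_lemma {n ι : Type*} [Fintype n] [DecidableEq n] [Fintype ι] [Nonempty ι]
    [DecidableEq ι] (c : ℂ) (hc : c ≠ 0)
    (hcard : Fintype.card ι = Fintype.card n * Fintype.card n)
    (X : ι → Matrix n n ℂ)
    (horth : ∀ a b, (X a * X b).trace = if a = b then c else 0) (A : Matrix n n ℂ) :
    A = c⁻¹ • ∑ a, (A * X a).trace • X a := by
  have li : LinearIndependent ℂ X := by
    rw [Fintype.linearIndependent_iff]
    intro g hg b
    have h1 : ((∑ a, g a • X a) * X b).trace = g b * c := by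
      rw [Finset.sum_mul]
      simp only [smul_mul_assoc, Matrix.trace_sum, Matrix.trace_smul, horth, smul_eq_mul,
        mul_ite, mul_zero]
      simp
    rw [hg] at h1
    simp at h1
    rcases h1 with h | h
    · exact h
    · exact absurd h hc
  have hcard' : Fintype.card ι = Module.finrank ℂ (Matrix n n ℂ) := by
    rw [Module.finrank_matrix, hcard, Module.finrank_self, mul_one]
  set B := basisOfLinearIndependentOfCardEqFinrank li hcard' with hB
  have hBc : ∀ a, B a = X a := fun a => by
    rw [hB, coe_basisOfLinearIndependentOfCardEqFinrank]
  have hrepr : A = ∑ a, B.repr A a • X a := by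
    conv_lhs => rw [← B.sum_repr A]
    exact Finset.sum_congr rfl fun a _ => by rw [hBc]
  have hco : ∀ b, B.repr A b = c⁻¹ * (A * X b).trace := by
    intro b
    have : (A * X b).trace = B.repr A b * c := by
      conv_lhs => rw [hrepr]
      rw [Finset.sum_mul]
      simp only [smul_mul_assoc, Matrix.trace_sum, Matrix.trace_smul, horth, smul_eq_mul,
        mul_ite, mul_zero]
      simp
    rw [this]; field_simp
  conv_lhs => rw [hrepr]
  rw [Finset.smul_sum]
  exact Finset.sum_congr rfl fun a _ => by rw [hco a, mul_smul]

/-- Two-event spatial Born rule: for the two-qudit spatial doubled density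
operator `W = (1/d⁴)∑ T^{μ₁,μ₂;ν₁,ν₂}(σ_{μ₁}⊗σ_{μ₂})⊗(σ_{ν₁}⊗σ_{ν₂})` with
`T^{μ₁,μ₂;ν₁,ν₂} = Tr[(σ_{μ₁}⊗σ_{μ₂})ρ(σ_{ν₁}⊗σ_{ν₂})]` and local measurement
operators `K_a`, `L_b`:
`Tr[(K_a ⊗ L_b ⊗ K_a† ⊗ L_b†) W] = Tr[(K_a ⊗ L_b) ρ (K_a† ⊗ L_b†)]`. -/
theorem two_event_spatial_Born_rule (d : ℕ) [NeZero d]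
    (σ : Fin (d ^ 2) → Matrix (Fin d) (Fin d) ℂ)
    (hherm : ∀ μ, (σ μ).IsHermitian)
    (hunit : σ 0 = 1)
    (htraceless : ∀ j : Fin (d ^ 2), j ≠ 0 → (σ j).trace = 0)
    (horth : ∀ μ ν, (σ μ * σ ν).trace = if μ = ν then (d : ℂ) else 0)
    (ρ : Matrix (Fin d × Fin d) (Fin d × Fin d) ℂ)
    (hρ : ρ.PosSemidef) (hρtr : ρ.trace = 1)
    (K L : Matrix (Fin d) (Fin d) ℂ)
    (W : Matrix ((Fin d × Fin d) × (Fin d × Fin d))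
        ((Fin d × Fin d) × (Fin d × Fin d)) ℂ)
    (hW : W = ((d : ℂ) ^ 4)⁻¹ •
        ∑ μ₁, ∑ μ₂, ∑ ν₁, ∑ ν₂,
          ((σ μ₁ ⊗ₖ σ μ₂) * ρ * (σ ν₁ ⊗ₖ σ ν₂)).trace •
            ((σ μ₁ ⊗ₖ σ μ₂) ⊗ₖ (σ ν₁ ⊗ₖ σ ν₂))) :
    (((K ⊗ₖ L) ⊗ₖ (Kᴴ ⊗ₖ Lᴴ)) * W).trace =
      ((K ⊗ₖ L) * ρ * (Kᴴ ⊗ₖ Lᴴ)).trace := by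
  have hd : (d : ℂ) ≠ 0 := Nat.cast_ne_zero.mpr (NeZero.ne d)
  have hc : ((d : ℂ) ^ 2) ≠ 0 := pow_ne_zero _ hd
  haveI : Nonempty (Fin (d ^ 2) × Fin (d ^ 2)) := by
    have : 0 < d ^ 2 := Nat.pow_pos (Nat.pos_of_ne_zero (NeZero.ne d))
    exact ⟨(⟨0, this⟩, ⟨0, this⟩)⟩
  set X : Fin (d ^ 2) × Fin (d ^ 2) → Matrix (Fin d × Fin d) (Fin d × Fin d) ℂ :=
    fun p => σ p.1 ⊗ₖ σ p.2 with hX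
  have hcard2 : Fintype.card (Fin (d ^ 2) × Fin (d ^ 2)) =
      Fintype.card (Fin d × Fin d) * Fintype.card (Fin d × Fin d) := by
    simp [pow_two]
  have horth2 : ∀ a b, (X a * X b).trace = if a = b then ((d : ℂ) ^ 2) else 0 := by
    rintro ⟨a1, a2⟩ ⟨b1, b2⟩
    rw [hX]
    simp only [← mul_kronecker_mul, trace_kronecker, horth]
    by_cases h1 : a1 = b1 <;> by_cases h2 : a2 = b2 <;>
      simp [h1, h2, Prod.ext_iff, pow_two]
  have key := expand_lemma ((d : ℂ) ^ 2) hc hcard2 X horth2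
  have hM := key (K ⊗ₖ L)
  have hN := key (Kᴴ ⊗ₖ Lᴴ)
  conv_rhs => rw [hM]
  rw [Matrix.smul_mul, Matrix.smul_mul, Matrix.trace_smul, Finset.sum_mul, Finset.sum_mul,
    Matrix.trace_sum]
  conv_rhs => rw [hN]
  simp only [hX, Finset.mul_sum, Finset.sum_mul, Matrix.smul_mul, Matrix.mul_smul,
    Matrix.trace_sum, Matrix.trace_smul, smul_eq_mul, Fintype.sum_prod_type,
    ← mul_kronecker_mul, trace_kronecker]
  rw [hW]
  simp only [hX, Finset.mul_sum, Finset.sum_mul, Matrix.smul_mul, Matrix.mul_smul,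
    Matrix.trace_sum, Matrix.trace_smul, smul_eq_mul, Fintype.sum_prod_type,
    ← mul_kronecker_mul, trace_kronecker]
  refine Finset.sum_congr rfl fun μ₁ _ => ?_
  refine Finset.sum_congr rfl fun μ₂ _ => ?_
  refine Finset.sum_congr rfl fun ν₁ _ => ?_
  refine Finset.sum_congr rfl fun ν₂ _ => ?_
  ring
end

section
/- Two-event temporal Born rule: for input density operator ρ, CPTP map ℰ, temporal doubled correlation tensor T^{μ₁,μ₂;ν₁,ν₂} = Tr[σ_{μ₂} ℰ(σ_{μ₁}ρσ_{ν₁}) σ_{ν₂}] and W = (1/d⁴)∑ T^{μ₁,μ₂;ν₁,ν₂}(σ_{μ₁}⊗σ_{μ₂})⊗(σ_{ν₁}⊗σ_{ν₂}), the doubled measurement M_{a,b} = K_a ⊗ L_b ⊗ K_a† ⊗ L_b† satisfies Tr(M_{a,b} W) = Tr[L_b ℰ(K_a ρ K_a†) L_b†]. -/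
open Matrix BigOperators ComplexOrder Kronecker

lemma sigma_expand (d : ℕ) [NeZero d]
    (σ : Fin (d ^ 2) → Matrix (Fin d) (Fin d) ℂ)
    (horth : ∀ μ ν, (σ μ * σ ν).trace = if μ = ν then (d : ℂ) else 0)
    (A : Matrix (Fin d) (Fin d) ℂ) :
    ∑ μ, (σ μ * A).trace • σ μ = (d : ℂ) • A := by
  have hd : (d : ℂ) ≠ 0 := Nat.cast_ne_zero.mpr (NeZero.ne d)
  have hli : LinearIndependent ℂ σ := by
    rw [Fintype.linearIndependent_iff]
    intro g hg j
    have h := congrArg (fun M => (σ j * M).trace) hg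
    simp [Matrix.mul_sum, Matrix.mul_smul, Matrix.trace_sum, Matrix.trace_smul,
      horth, Finset.sum_ite_eq', smul_eq_mul] at h
    exact h.resolve_right (NeZero.ne d)
  have hcard : Fintype.card (Fin (d ^ 2)) =
      Module.finrank ℂ (Matrix (Fin d) (Fin d) ℂ) := by
    simp [Module.finrank_matrix, sq]
  let b := basisOfLinearIndependentOfCardEqFinrank hli hcard
  have hb : ∀ i, b i = σ i := fun i => by
    simp [b, coe_basisOfLinearIndependentOfCardEqFinrank]
  have hA : ∑ i, b.repr A i • σ i = A := by
    conv_rhs => rw [← b.sum_repr A]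
    simp [hb]
  calc ∑ μ, (σ μ * A).trace • σ μ
      = ∑ μ, ((d : ℂ) * b.repr A μ) • σ μ := by
        refine Finset.sum_congr rfl fun μ _ => ?_
        congr 1
        conv_lhs => rw [← hA]
        rw [Matrix.mul_sum, Matrix.trace_sum]
        simp only [Matrix.mul_smul, Matrix.trace_smul, horth, smul_eq_mul, mul_ite, mul_zero]
        simp [Finset.sum_ite_eq, mul_comm]
    _ = (d : ℂ) • A := by
        conv_rhs => rw [← hA]
        rw [Finset.smul_sum]
        simp [smul_smul]


private lemma sum4_comm {n : ℕ} (F : Fin n → Fin n → Fin n → Fin n → ℂ) :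
    ∑ a, ∑ b, ∑ c, ∑ e, F a b c e = ∑ e, ∑ c, ∑ a, ∑ b, F a b c e :=
  calc ∑ a, ∑ b, ∑ c, ∑ e, F a b c e
      = ∑ a, ∑ b, ∑ e, ∑ c, F a b c e :=
        Finset.sum_congr rfl fun _ _ => Finset.sum_congr rfl fun _ _ => Finset.sum_comm
    _ = ∑ a, ∑ e, ∑ b, ∑ c, F a b c e :=
        Finset.sum_congr rfl fun _ _ => Finset.sum_comm
    _ = ∑ e, ∑ a, ∑ b, ∑ c, F a b c e := Finset.sum_comm
    _ = ∑ e, ∑ a, ∑ c, ∑ b, F a b c e :=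
        Finset.sum_congr rfl fun _ _ => Finset.sum_congr rfl fun _ _ => Finset.sum_comm
    _ = ∑ e, ∑ c, ∑ a, ∑ b, F a b c e :=
        Finset.sum_congr rfl fun _ _ => Finset.sum_comm

set_option maxHeartbeats 1000000 in

/-- Two-event temporal Born rule: for input density operator ρ, a CPTP map ℰ
(given via a Kraus decomposition), temporal doubled correlation tensor
`T^{μ₁,μ₂;ν₁,ν₂} = Tr[σ_{μ₂} ℰ(σ_{μ₁}ρσ_{ν₁}) σ_{ν₂}]` and
`W = (1/d⁴)∑ T^{μ₁,μ₂;ν₁,ν₂}(σ_{μ₁}⊗σ_{μ₂})⊗(σ_{ν₁}⊗σ_{ν₂})`, the doubled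
measurement `M_{a,b} = K_a ⊗ L_b ⊗ K_a† ⊗ L_b†` satisfies
`Tr(M_{a,b} W) = Tr[L_b ℰ(K_a ρ K_a†) L_b†]`. -/
theorem two_event_temporal_Born_rule (d : ℕ) [NeZero d] (r : ℕ)
    (σ : Fin (d ^ 2) → Matrix (Fin d) (Fin d) ℂ)
    (hherm : ∀ μ, (σ μ).IsHermitian)
    (hunit : σ 0 = 1)
    (htraceless : ∀ j : Fin (d ^ 2), j ≠ 0 → (σ j).trace = 0)
    (horth : ∀ μ ν, (σ μ * σ ν).trace = if μ = ν then (d : ℂ) else 0)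
    (ρ : Matrix (Fin d) (Fin d) ℂ) (hρ : ρ.PosSemidef) (hρtr : ρ.trace = 1)
    (E : Matrix (Fin d) (Fin d) ℂ → Matrix (Fin d) (Fin d) ℂ)
    (Kr : Fin r → Matrix (Fin d) (Fin d) ℂ)
    (hKraus : ∀ X, E X = ∑ a, Kr a * X * (Kr a)ᴴ)
    (hTP : ∑ a, (Kr a)ᴴ * Kr a = 1)
    (K L : Matrix (Fin d) (Fin d) ℂ)
    (W : Matrix ((Fin d × Fin d) × (Fin d × Fin d))
        ((Fin d × Fin d) × (Fin d × Fin d)) ℂ)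
    (hW : W = ((d : ℂ) ^ 4)⁻¹ •
        ∑ μ₁, ∑ μ₂, ∑ ν₁, ∑ ν₂,
          (σ μ₂ * E (σ μ₁ * ρ * σ ν₁) * σ ν₂).trace •
            ((σ μ₁ ⊗ₖ σ μ₂) ⊗ₖ (σ ν₁ ⊗ₖ σ ν₂))) :
    (((K ⊗ₖ L) ⊗ₖ (Kᴴ ⊗ₖ Lᴴ)) * W).trace =
      (L * E (K * ρ * Kᴴ) * Lᴴ).trace := by

  have hd : (d : ℂ) ≠ 0 := Nat.cast_ne_zero.mpr (NeZero.ne d)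
  have hd4 : ((d : ℂ) ^ 4) ≠ 0 := pow_ne_zero _ hd
  have hEsum : ∀ (f : Fin (d ^ 2) → Matrix (Fin d) (Fin d) ℂ),
      E (∑ i, f i) = ∑ i, E (f i) := by
    intro f
    simp only [hKraus, Matrix.mul_sum, Matrix.sum_mul]
    rw [Finset.sum_comm]
  have hEsmul : ∀ (c : ℂ) (X : Matrix (Fin d) (Fin d) ℂ), E (c • X) = c • E X := by
    intro c X
    simp only [hKraus, Matrix.mul_smul, Matrix.smul_mul, Finset.smul_sum]
  -- the key scalar identity
  have key : ∑ μ₁, ∑ μ₂, ∑ ν₁, ∑ ν₂,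
      (σ μ₂ * E (σ μ₁ * ρ * σ ν₁) * σ ν₂).trace *
        ((K * σ μ₁).trace * ((L * σ μ₂).trace *
          ((Kᴴ * σ ν₁).trace * (Lᴴ * σ ν₂).trace))) =
      (d : ℂ) ^ 4 * (L * E (K * ρ * Kᴴ) * Lᴴ).trace := by
    have e1 : ((d : ℂ) ^ 4) • (L * E (K * ρ * Kᴴ) * Lᴴ) =
        (∑ μ₂, (σ μ₂ * L).trace • σ μ₂) *
          E ((∑ μ₁, (σ μ₁ * K).trace • σ μ₁) * ρ *
             (∑ ν₁, (σ ν₁ * Kᴴ).trace • σ ν₁)) *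
          (∑ ν₂, (σ ν₂ * Lᴴ).trace • σ ν₂) := by
      rw [sigma_expand d σ horth L, sigma_expand d σ horth K,
        sigma_expand d σ horth Kᴴ, sigma_expand d σ horth Lᴴ]
      simp only [Matrix.smul_mul, Matrix.mul_smul, hEsmul, smul_smul]
      congr 1
      ring
    have e2 := congrArg Matrix.trace e1
    rw [Matrix.trace_smul, smul_eq_mul] at e2
    rw [e2]
    simp only [Matrix.sum_mul, Matrix.mul_sum, Matrix.smul_mul, Matrix.mul_smul,
      hEsum, hEsmul, Matrix.trace_sum, Matrix.trace_smul, smul_eq_mul]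
    simp only [Finset.mul_sum, Finset.sum_mul]
    rw [sum4_comm]
    refine Finset.sum_congr rfl fun ν₂ _ => Finset.sum_congr rfl fun ν₁ _ => ?_
    refine Finset.sum_congr rfl fun μ₁ _ => Finset.sum_congr rfl fun μ₂ _ => ?_
    rw [Matrix.trace_mul_comm K (σ μ₁), Matrix.trace_mul_comm L (σ μ₂),
      Matrix.trace_mul_comm Kᴴ (σ ν₁), Matrix.trace_mul_comm Lᴴ (σ ν₂)]
    ring
  rw [hW, Matrix.mul_smul, Matrix.trace_smul, smul_eq_mul]
  simp only [Matrix.mul_sum, Matrix.mul_smul, Matrix.trace_sum, Matrix.trace_smul,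
    ← Matrix.mul_kronecker_mul, Matrix.trace_kronecker, smul_eq_mul]
  rw [inv_mul_eq_iff_eq_mul₀ hd4, ← key]
  refine Finset.sum_congr rfl fun μ₁ _ => Finset.sum_congr rfl fun μ₂ _ => ?_
  refine Finset.sum_congr rfl fun ν₁ _ => Finset.sum_congr rfl fun ν₂ _ => ?_
  ring
end

section
/- Criterion of temporality: for a purely spatial doubled density operator W (built from a density operator ρ on (ℂ^d)^{⊗N} via the spatial doubled correlation tensor), both the left-reduced state Tr_R(W) and the right-reduced state Tr_L(W) are positive semidefinite operators with unit trace (namely both equal ρ). Consequently, if either reduced half of a doubled density operator fails to be positive semidefinite with unit trace, the underlying process cannot be purely spatial. -/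
open Matrix BigOperators ComplexOrder Kronecker

/-- The N-fold tensor (Kronecker) product `σ_{μ₁} ⊗ ⋯ ⊗ σ_{μ_N}`, written entrywise. -/
def paulTens {d m N : ℕ} (σ : Fin m → Matrix (Fin d) (Fin d) ℂ)
    (μ : Fin N → Fin m) : Matrix (Fin N → Fin d) (Fin N → Fin d) ℂ :=
  Matrix.of fun x y => ∏ i, σ (μ i) (x i) (y i)

/-- Partial trace over the first (left) tensor factor. -/
noncomputable def ptraceL {α β : Type*} [Fintype α]
    (M : Matrix (α × β) (α × β) ℂ) : Matrix β β ℂ :=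
  Matrix.of fun i j => ∑ a, M (a, i) (a, j)

/-- Partial trace over the second (right) tensor factor. -/
noncomputable def ptraceR {α β : Type*} [Fintype β]
    (M : Matrix (α × β) (α × β) ℂ) : Matrix α α ℂ :=
  Matrix.of fun i j => ∑ b, M (i, b) (j, b)


lemma sigma_complete {d : ℕ} [NeZero d]
    (σ : Fin (d ^ 2) → Matrix (Fin d) (Fin d) ℂ)
    (horth : ∀ μ ν, (σ μ * σ ν).trace = if μ = ν then (d : ℂ) else 0)
    (A : Matrix (Fin d) (Fin d) ℂ) :
    ∑ μ, (σ μ * A).trace • σ μ = (d : ℂ) • A := by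
  have hd : (d : ℂ) ≠ 0 := Nat.cast_ne_zero.mpr (NeZero.ne d)
  have hli : LinearIndependent ℂ σ := by
    rw [linearIndependent_iff']
    intro s c hsum ν hν
    have h := congrArg (fun M => (σ ν * M).trace) hsum
    simp only [Matrix.mul_sum, Matrix.mul_smul, Matrix.trace_sum, Matrix.trace_smul,
      horth, smul_eq_mul, mul_ite, mul_zero, Matrix.mul_zero, Matrix.trace_zero] at h
    rw [Finset.sum_ite_eq s ν (fun i => c i * (d:ℂ))] at h
    simp only [hν, if_true] at h
    exact (mul_eq_zero.1 h).resolve_right hd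
  have hcard : Fintype.card (Fin (d ^ 2)) = Module.finrank ℂ (Matrix (Fin d) (Fin d) ℂ) := by
    simp [Module.finrank_matrix]; ring
  let b := basisOfLinearIndependentOfCardEqFinrank hli hcard
  have hb : ∀ μ, b μ = σ μ := fun μ => congrFun (coe_basisOfLinearIndependentOfCardEqFinrank hli hcard) μ
  have hA : ∑ μ, b.repr A μ • σ μ = A := by
    conv_rhs => rw [← b.sum_repr A]
    exact Finset.sum_congr rfl fun μ _ => by rw [hb]
  have htr : ∀ ν, (σ ν * A).trace = (d : ℂ) * b.repr A ν := by
    intro ν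
    conv_lhs => rw [← hA]
    simp only [Matrix.mul_sum, Matrix.mul_smul, Matrix.trace_sum, Matrix.trace_smul,
      horth, smul_eq_mul, mul_ite, mul_zero]
    rw [Finset.sum_ite_eq Finset.univ ν (fun i => b.repr A i * (d:ℂ))]
    simp [mul_comm]
  calc ∑ μ, (σ μ * A).trace • σ μ = ∑ μ, (d : ℂ) • (b.repr A μ • σ μ) := by
        simp only [htr, smul_smul]
    _ = (d : ℂ) • A := by rw [← Finset.smul_sum, hA]

lemma sigma_complete_entry {d : ℕ} [NeZero d]
    (σ : Fin (d ^ 2) → Matrix (Fin d) (Fin d) ℂ)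
    (horth : ∀ μ ν, (σ μ * σ ν).trace = if μ = ν then (d : ℂ) else 0)
    (a b x y : Fin d) :
    ∑ μ, σ μ a b * σ μ x y = if x = b ∧ y = a then (d : ℂ) else 0 := by
  have h := sigma_complete σ horth (Matrix.single b a 1)
  have htr : ∀ μ, (σ μ * Matrix.single b a 1).trace = σ μ a b := by
    intro μ
    simp [Matrix.trace, Matrix.diag, Matrix.mul_apply, Matrix.single, Matrix.of_apply,
      Finset.sum_ite_eq, ite_and]
  have h2 := congrFun (congrFun h x) y
  simp only [Finset.sum_apply, Matrix.smul_apply, htr, smul_eq_mul] at h2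
  simp only [Matrix.single, Matrix.of_apply, Matrix.smul_apply, smul_eq_mul,
    Matrix.sum_apply] at h2
  rw [h2]
  by_cases h1 : x = b
  · subst h1
    by_cases h3 : y = a
    · subst h3; simp
    · rw [if_neg (fun h : x = x ∧ a = y => h3 h.2.symm), mul_zero,
        if_neg (fun h : x = x ∧ y = a => h3 h.2)]
  · rw [if_neg (fun h : b = x ∧ a = y => h1 h.1.symm), mul_zero,
      if_neg (fun h : x = b ∧ y = a => h1 h.1)]

lemma trace_paulTens {d m N : ℕ} (σ : Fin m → Matrix (Fin d) (Fin d) ℂ)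
    (ν : Fin N → Fin m) : (paulTens σ ν).trace = ∏ i, (σ (ν i)).trace := by
  simp only [Matrix.trace, Matrix.diag, paulTens, Matrix.of_apply]
  rw [Finset.prod_univ_sum, Fintype.piFinset_univ]

lemma paulTens_zero {d m N : ℕ} [NeZero m] (σ : Fin m → Matrix (Fin d) (Fin d) ℂ)
    (hunit : σ 0 = 1) : paulTens σ (0 : Fin N → Fin m) = 1 := by
  ext x y
  simp only [paulTens, Matrix.of_apply, Pi.zero_apply, hunit, Matrix.one_apply]
  rw [Finset.prod_boole]
  simp [funext_iff]

lemma paulTens_complete_entry {d N : ℕ} [NeZero d]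
    (σ : Fin (d ^ 2) → Matrix (Fin d) (Fin d) ℂ)
    (horth : ∀ μ ν, (σ μ * σ ν).trace = if μ = ν then (d : ℂ) else 0)
    (a b x y : Fin N → Fin d) :
    ∑ μ : Fin N → Fin (d ^ 2), paulTens σ μ a b * paulTens σ μ x y
      = if x = b ∧ y = a then (d : ℂ) ^ N else 0 := by
  simp only [paulTens, Matrix.of_apply, ← Finset.prod_mul_distrib]
  rw [← Fintype.piFinset_univ,
    ← Finset.prod_univ_sum (fun _ : Fin N => (Finset.univ : Finset (Fin (d ^ 2))))
      (fun i j => σ j (a i) (b i) * σ j (x i) (y i))]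
  simp only [sigma_complete_entry σ horth]
  by_cases h : x = b ∧ y = a
  · rw [if_pos h]
    obtain ⟨hb, ha⟩ := h; subst hb; subst ha
    simp
  · rw [if_neg h, not_and_or] at *
    rcases h with h | h <;> obtain ⟨i, hi⟩ := Function.ne_iff.mp h <;>
      exact Finset.prod_eq_zero (Finset.mem_univ i) (by simp [hi])

lemma ptraceR_smul {α β : Type*} [Fintype β] (c : ℂ) (M : Matrix (α × β) (α × β) ℂ) :
    ptraceR (c • M) = c • ptraceR M := by
  ext i j; simp [ptraceR, Finset.mul_sum]

lemma ptraceL_smul {α β : Type*} [Fintype α] (c : ℂ) (M : Matrix (α × β) (α × β) ℂ) :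
    ptraceL (c • M) = c • ptraceL M := by
  ext i j; simp [ptraceL, Finset.mul_sum]

lemma ptraceR_sum {α β ι : Type*} [Fintype β] (s : Finset ι)
    (f : ι → Matrix (α × β) (α × β) ℂ) :
    ptraceR (∑ i ∈ s, f i) = ∑ i ∈ s, ptraceR (f i) := by
  ext i j
  simp only [ptraceR, Matrix.of_apply, Matrix.sum_apply]
  rw [Finset.sum_comm]

lemma ptraceL_sum {α β ι : Type*} [Fintype α] (s : Finset ι)
    (f : ι → Matrix (α × β) (α × β) ℂ) :
    ptraceL (∑ i ∈ s, f i) = ∑ i ∈ s, ptraceL (f i) := by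
  ext i j
  simp only [ptraceL, Matrix.of_apply, Matrix.sum_apply]
  rw [Finset.sum_comm]

lemma ptraceR_kron {α β : Type*} [Fintype β] (A : Matrix α α ℂ) (B : Matrix β β ℂ) :
    ptraceR (A ⊗ₖ B) = B.trace • A := by
  ext i j
  simp only [ptraceR, Matrix.of_apply, kroneckerMap_apply, Matrix.smul_apply,
    Matrix.trace, Matrix.diag, smul_eq_mul]
  rw [← Finset.mul_sum, mul_comm]

lemma ptraceL_kron {α β : Type*} [Fintype α] (A : Matrix α α ℂ) (B : Matrix β β ℂ) :
    ptraceL (A ⊗ₖ B) = A.trace • B := by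
  ext i j
  simp only [ptraceL, Matrix.of_apply, kroneckerMap_apply, Matrix.smul_apply,
    Matrix.trace, Matrix.diag, smul_eq_mul]
  rw [← Finset.sum_mul, mul_comm]

lemma sum_trace_smul {d N : ℕ} [NeZero d]
    (σ : Fin (d ^ 2) → Matrix (Fin d) (Fin d) ℂ)
    (horth : ∀ μ ν, (σ μ * σ ν).trace = if μ = ν then (d : ℂ) else 0)
    (ρ : Matrix (Fin N → Fin d) (Fin N → Fin d) ℂ) :
    ∑ μ : Fin N → Fin (d ^ 2), (paulTens σ μ * ρ).trace • paulTens σ μ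
      = ((d : ℂ) ^ N) • ρ := by
  ext x y
  simp only [Matrix.sum_apply, Matrix.smul_apply, smul_eq_mul]
  have htr : ∀ μ : Fin N → Fin (d ^ 2),
      (paulTens σ μ * ρ).trace = ∑ a, ∑ b, paulTens σ μ a b * ρ b a := by
    intro μ; simp [Matrix.trace, Matrix.diag, Matrix.mul_apply]
  calc ∑ μ : Fin N → Fin (d ^ 2), (paulTens σ μ * ρ).trace * paulTens σ μ x y
      = ∑ a, ∑ b, ρ b a * ∑ μ : Fin N → Fin (d ^ 2),
          paulTens σ μ a b * paulTens σ μ x y := by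
        simp only [htr, Finset.sum_mul]
        rw [Finset.sum_comm]
        refine Finset.sum_congr rfl fun a _ => ?_
        rw [Finset.sum_comm]
        refine Finset.sum_congr rfl fun b _ => ?_
        rw [Finset.mul_sum]
        exact Finset.sum_congr rfl fun μ _ => by ring
    _ = (d : ℂ) ^ N * ρ x y := by
        simp only [paulTens_complete_entry σ horth, mul_ite, mul_zero, ite_and]
        simp only [Finset.sum_ite_eq, Finset.mem_univ, if_true]
        ring

/-- Criterion of temporality: for a purely spatial doubled density operator W,
built from a density operator ρ on `(ℂ^d)^{⊗N}`, both the left-reduced state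
`Tr_R(W)` and the right-reduced state `Tr_L(W)` equal ρ, hence are positive
semidefinite operators with unit trace. -/
theorem spatial_DDO_reduced_are_states (d : ℕ) [NeZero d] (N : ℕ)
    (σ : Fin (d ^ 2) → Matrix (Fin d) (Fin d) ℂ)
    (hherm : ∀ μ, (σ μ).IsHermitian)
    (hunit : σ 0 = 1)
    (htraceless : ∀ j : Fin (d ^ 2), j ≠ 0 → (σ j).trace = 0)
    (horth : ∀ μ ν, (σ μ * σ ν).trace = if μ = ν then (d : ℂ) else 0)
    (ρ : Matrix (Fin N → Fin d) (Fin N → Fin d) ℂ)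
    (hρ : ρ.PosSemidef) (hρtr : ρ.trace = 1)
    (W : Matrix ((Fin N → Fin d) × (Fin N → Fin d))
        ((Fin N → Fin d) × (Fin N → Fin d)) ℂ)
    (hW : W = ((d : ℂ) ^ (2 * N))⁻¹ •
        ∑ μ, ∑ ν, (paulTens σ μ * ρ * paulTens σ ν).trace •
          (paulTens σ μ ⊗ₖ paulTens σ ν)) :
    ptraceR W = ρ ∧ ptraceL W = ρ ∧
      (ptraceR W).PosSemidef ∧ (ptraceR W).trace = 1 ∧
      (ptraceL W).PosSemidef ∧ (ptraceL W).trace = 1 := by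
  have hPtr : ∀ ν : Fin N → Fin (d ^ 2),
      (paulTens σ ν).trace = if ν = 0 then (d : ℂ) ^ N else 0 := by
    intro ν
    rw [trace_paulTens]
    by_cases h : ν = 0
    · subst h
      simp [hunit]
    · rw [if_neg h]
      obtain ⟨i, hi⟩ := Function.ne_iff.mp h
      exact Finset.prod_eq_zero (Finset.mem_univ i) (htraceless _ (by simpa using hi))
  have hdN : ((d : ℂ) ^ (2 * N))⁻¹ * ((d : ℂ) ^ N * (d : ℂ) ^ N) = 1 := by
    rw [← pow_add, ← two_mul]
    exact inv_mul_cancel₀ (pow_ne_zero _ (Nat.cast_ne_zero.mpr (NeZero.ne d)))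
  have hR : ptraceR W = ρ := by
    rw [hW, ptraceR_smul, ptraceR_sum]
    simp only [ptraceR_sum, ptraceR_smul, ptraceR_kron, hPtr, ite_smul, zero_smul,
      smul_ite, smul_zero, Finset.sum_ite_eq', Finset.mem_univ, if_true]
    have key : ∀ μ : Fin N → Fin (d ^ 2),
        (paulTens σ μ * ρ * paulTens σ (0 : Fin N → Fin (d ^ 2))).trace •
            (((d : ℂ) ^ N) • paulTens σ μ)
        = ((d : ℂ) ^ N) • ((paulTens σ μ * ρ).trace • paulTens σ μ) := by
      intro μ; rw [paulTens_zero σ hunit, mul_one, smul_comm]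
    simp only [key]
    rw [← Finset.smul_sum, sum_trace_smul σ horth, smul_smul, smul_smul, mul_assoc,
      hdN, one_smul]
  have hL : ptraceL W = ρ := by
    rw [hW, ptraceL_smul, ptraceL_sum]
    simp only [ptraceL_sum, ptraceL_smul, ptraceL_kron, hPtr, ite_smul, zero_smul,
      smul_ite, smul_zero]
    rw [Finset.sum_comm]
    simp only [Finset.sum_ite_eq', Finset.mem_univ, if_true]
    have key : ∀ ν : Fin N → Fin (d ^ 2),
        (paulTens σ (0 : Fin N → Fin (d ^ 2)) * ρ * paulTens σ ν).trace •
            (((d : ℂ) ^ N) • paulTens σ ν)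
        = ((d : ℂ) ^ N) • ((paulTens σ ν * ρ).trace • paulTens σ ν) := by
      intro ν
      rw [paulTens_zero σ hunit, one_mul, Matrix.trace_mul_comm, smul_comm]
    simp only [key]
    rw [← Finset.smul_sum, sum_trace_smul σ horth, smul_smul, smul_smul, mul_assoc,
      hdN, one_smul]
  exact ⟨hR, hL, by rw [hR]; exact hρ, by rw [hR]; exact hρtr,
    by rw [hL]; exact hρ, by rw [hL]; exact hρtr⟩
end
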